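/- arXiv:0909.1533 — 4 statements merged into one kernel-verified Lean document; each statement's English description precedes it below -/
import Mathlib

section
/- Let V be a finite-dimensional real vector space and f : V → V a linear automorphism of finite order, i.e. f^n = id for some integer n ≥ 1. Then det(f) = (−1)^(dim V − dim V^f), where V^f = {v ∈ V : f(v) = v} is the fixed subspace of f. -/
/-!
As `X ^ n - 1` is separable, `f` is semisimple, so `dim V^f` is the multiplicity `k` of `1` as a
root of the characteristic polynomial: `χ_f = (X - 1) ^ k * g` with `g(1) ≠ 0`. A real root of
`χ_f` is an eigenvalue, hence a real `n`-th root of unity, so the monic polynomial `g` has no root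
on `[0, ∞)` and `g(0) > 0`. Therefore `det f = (-1) ^ (dim V + k) * g(0)` has the sign
`(-1) ^ (dim V - k)`, while `|det f| = 1` because `(det f) ^ n = 1`.
-/

open Polynomial Module

namespace Module.End

variable {K V : Type*} [Field K] [AddCommGroup V] [Module K V] {f : End K V} {n : ℕ}

theorem isSemisimple_of_pow_eq_one (hn : (n : K) ≠ 0) (hf : f ^ n = 1) : f.IsSemisimple :=
  isSemisimple_of_squarefree_aeval_eq_zero (separable_X_pow_sub_C 1 hn one_ne_zero).squarefree
    (by simp [hf])

theorem IsFinitelySemisimple.finrank_eigenspace_eq_rootMultiplicity [FiniteDimensional K V]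
    (hf : f.IsFinitelySemisimple) (μ : K) :
    finrank K (f.eigenspace μ) = f.charpoly.rootMultiplicity μ := by
  rw [← hf.maxGenEigenspace_eq_eigenspace, LinearMap.finrank_maxGenEigenspace_eq]

theorem HasEigenvalue.pow_eq_one_of_pow_eq_one {μ : K} (hμ : f.HasEigenvalue μ)
    (hf : f ^ n = 1) : μ ^ n = 1 := by
  obtain ⟨v, hv⟩ := hμ.exists_hasEigenvector
  have hfix : μ ^ n • v = (1 : K) • v := by rw [← hv.pow_apply, hf, one_apply, one_smul]
  exact smul_left_injective K hv.2 hfix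

theorem HasEigenvalue.eq_one_of_nonneg_of_pow_eq_one [LinearOrder K] [IsStrictOrderedRing K]
    {μ : K} (hμ : f.HasEigenvalue μ) (hμ0 : 0 ≤ μ) (hn : n ≠ 0) (hf : f ^ n = 1) : μ = 1 :=
  (pow_eq_one_iff_of_nonneg hμ0 hn).mp (hμ.pow_eq_one_of_pow_eq_one hf)

end Module.End

theorem LinearMap.abs_det_eq_one_of_pow_eq_one {K V : Type*} [Field K] [LinearOrder K]
    [IsStrictOrderedRing K] [AddCommGroup V] [Module K V] {f : Module.End K V} {n : ℕ}
    (hn : n ≠ 0) (hf : f ^ n = 1) : |LinearMap.det f| = 1 :=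
  (pow_eq_one_iff_of_nonneg (abs_nonneg _) hn).mp <| by
    rw [← abs_pow, ← map_pow, hf, map_one, abs_one]

theorem Polynomial.Monic.eval_pos_of_not_isRoot_Ici {p : ℝ[X]} (hp : p.Monic) {a : ℝ}
    (h : ∀ x ∈ Set.Ici a, ¬ p.IsRoot x) : 0 < p.eval a := by
  rcases Nat.eq_zero_or_pos p.natDegree with h0 | hdeg
  · simp [hp.natDegree_eq_zero.mp h0]
  by_contra! hle
  have hlim := tendsto_atTop_of_leadingCoeff_nonneg p (natDegree_pos_iff_degree_pos.mp hdeg)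
    (hp.leadingCoeff ▸ zero_le_one)
  obtain ⟨b, hb, hab⟩ := ((hlim.eventually_gt_atTop 0).and (Filter.eventually_ge_atTop a)).exists
  obtain ⟨x, hx, hroot⟩ := intermediate_value_Icc hab p.continuous.continuousOn ⟨hle, hb.le⟩
  exact h x hx.1 hroot

/-- If `f` is a finite-order linear automorphism of a finite-dimensional real vector
space `V`, then `det f = (-1)^(dim V - dim V^f)`, where `V^f = ker (f - id)` is the
fixed subspace of `f`. -/
theorem det_eq_neg_one_pow_of_finite_order
    {V : Type*} [AddCommGroup V] [Module ℝ V] [FiniteDimensional ℝ V]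
    (f : V ≃ₗ[ℝ] V) (n : ℕ) (hn : 1 ≤ n) (hf : f ^ n = 1) :
    LinearMap.det (f.toLinearMap) =
      (-1 : ℝ) ^ (Module.finrank ℝ V -
        Module.finrank ℝ (LinearMap.ker (f.toLinearMap - LinearMap.id))) := by
  have hn0 : n ≠ 0 := by omega
  have hφ : f.toLinearMap ^ n = 1 := by
    rw [← LinearEquiv.automorphismGroup.toLinearMapMonoidHom_apply, ← map_pow, hf, map_one]
  set φ : Module.End ℝ V := f.toLinearMap
  have hk : finrank ℝ (LinearMap.ker (φ - LinearMap.id)) = φ.charpoly.rootMultiplicity 1 := by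
    rw [← (Module.End.isSemisimple_of_pow_eq_one (Nat.cast_ne_zero.mpr hn0) hφ
      ).isFinitelySemisimple.finrank_eigenspace_eq_rootMultiplicity, Module.End.eigenspace_def,
      one_smul, Module.End.one_eq_id]
  obtain ⟨g, hχ, hg⟩ := φ.charpoly.exists_eq_pow_rootMultiplicity_mul_and_not_dvd
    φ.charpoly_monic.ne_zero 1
  rw [← hk] at hχ
  set k := finrank ℝ (LinearMap.ker (φ - LinearMap.id))
  have hg_pos : 0 < g.eval 0 := by
    refine (((monic_X_sub_C 1).pow k).of_mul_monic_left (hχ ▸ φ.charpoly_monic)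
      ).eval_pos_of_not_isRoot_Ici fun x hx hroot => hg (dvd_iff_isRoot.mpr ?_)
    have hμ : φ.HasEigenvalue x := by
      rw [Module.End.hasEigenvalue_iff_isRoot_charpoly, hχ, IsRoot, eval_mul, hroot.eq_zero,
        mul_zero]
    rwa [← hμ.eq_one_of_nonneg_of_pow_eq_one hx hn0 hφ]
  have hdet : φ.det = (-1) ^ (finrank ℝ V + k) * g.eval 0 := by
    rw [LinearMap.det_eq_sign_charpoly_coeff, coeff_zero_eq_eval_zero, hχ, eval_mul, eval_pow]
    simp [pow_add, mul_assoc]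
  have hg1 : g.eval 0 = 1 := by
    simpa [hdet, abs_of_pos hg_pos] using LinearMap.abs_det_eq_one_of_pow_eq_one hn0 hφ
  have hkd : k ≤ finrank ℝ V := Submodule.finrank_le _
  rw [hdet, hg1, mul_one, show finrank ℝ V + k = finrank ℝ V - k + 2 * k by omega, pow_add,
    pow_mul, neg_one_sq, one_pow, mul_one]
end

section
/- Let X be a finite set, T : X → X a bijection, ν : X → X a fixed-point-free involution commuting with T, and P ⊆ X a subset such that ν(P) equals the complement X \ P. Let O ⊆ X be an orbit of the cyclic group generated by T such that O ∩ ν(O) = ∅. Then the set {x ∈ O ∪ ν(O) : x ∈ P and T(x) ∉ P} has even cardinality. -/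
/-!
Since `ν` commutes with `T` and swaps `P` with its complement, it carries the points of `O`
leaving `P` under `T` bijectively onto the points of `ν(O)` entering `P`. On a finite
`T`-invariant set such as `ν(O)`, points enter and leave `P` equally often, because `T` maps
`ν(O) ∩ T⁻¹(P)` bijectively onto `ν(O) ∩ P`. As `O` and `ν(O)` are disjoint, the count over
`O ∪ ν(O)` is therefore twice the count over `ν(O)`.
-/

open Set

section

variable {X : Type*}

def exitSet (T : X → X) (P S : Set X) : Set X := {x | x ∈ S ∧ x ∈ P ∧ T x ∉ P}

def entrySet (T : X → X) (P S : Set X) : Set X := {x | x ∈ S ∧ x ∉ P ∧ T x ∈ P}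

theorem exitSet_eq_sdiff (T : X → X) (P S : Set X) :
    exitSet T P S = (S ∩ P) \ (S ∩ T ⁻¹' P) := by
  ext x
  simp only [exitSet, mem_ofPred_eq, mem_sdiff, mem_inter_iff, mem_preimage]
  tauto

theorem entrySet_eq_sdiff (T : X → X) (P S : Set X) :
    entrySet T P S = (S ∩ T ⁻¹' P) \ (S ∩ P) := by
  ext x
  simp only [entrySet, mem_ofPred_eq, mem_sdiff, mem_inter_iff, mem_preimage]
  tauto

theorem exitSet_union (T : X → X) (P S S' : Set X) :
    exitSet T P (S ∪ S') = exitSet T P S ∪ exitSet T P S' := by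
  ext x
  simp only [exitSet, mem_union, mem_ofPred_eq]
  tauto

theorem ncard_exitSet_eq_ncard_entrySet (T : Equiv.Perm X) (P : Set X) {S : Set X}
    (hS : S.Finite) (hTS : T ⁻¹' S = S) :
    (exitSet T P S).ncard = (entrySet T P S).ncard := by
  have hT : (S ∩ T ⁻¹' P).ncard = (S ∩ P).ncard := by
    rw [← hTS, ← preimage_inter, hTS,
      ncard_preimage_of_injective_subset_range T.injective (by simp)]
  rw [exitSet_eq_sdiff, entrySet_eq_sdiff,
    ← ncard_eq_ncard_iff_ncard_sdiff_eq_ncard_sdiff (hS.inter_of_left _) (hS.inter_of_left _)]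
  exact hT.symm

theorem preimage_exitSet {T ν : X → X} {P : Set X} (hνP : ν ⁻¹' P = Pᶜ)
    (hcomm : ∀ x, ν (T x) = T (ν x)) (S : Set X) :
    ν ⁻¹' exitSet T P S = entrySet T P (ν ⁻¹' S) := by
  have hP : ∀ y, ν y ∈ P ↔ y ∉ P := fun y => Set.ext_iff.mp hνP y
  ext x
  simp only [exitSet, entrySet, mem_preimage, mem_ofPred_eq, ← hcomm, hP, not_not]

theorem Equiv.Perm.preimage_range_zpow_apply (T : Equiv.Perm X) (a : X) :
    T ⁻¹' range (fun n : ℤ => (T ^ n) a) = range (fun n : ℤ => (T ^ n) a) := by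
  ext x
  simp only [mem_preimage, mem_range]
  constructor
  · rintro ⟨n, hn⟩
    refine ⟨-1 + n, ?_⟩
    rw [zpow_add, zpow_neg_one, Equiv.Perm.mul_apply, hn]
    exact T.symm_apply_apply x
  · rintro ⟨n, rfl⟩
    exact ⟨1 + n, by rw [zpow_one_add, Equiv.Perm.mul_apply]⟩

end

theorem asymmetric_orbit_even_transitions_general {X : Type*} [Fintype X]
    (T : Equiv.Perm X) (ν : X → X)
    (hν_inv : Function.Involutive ν)
    (hcomm : ∀ x, ν (T x) = T (ν x))
    (P : Set X) (hP : ν '' P = Pᶜ)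
    (a : X) (O : Set X) (hO : O = Set.range (fun n : ℤ => (T ^ n) a))
    (hdisj : O ∩ (ν '' O) = ∅) :
    Even (Set.ncard {x | x ∈ O ∪ ν '' O ∧ x ∈ P ∧ T x ∉ P}) := by
  rw [hν_inv.image_eq_preimage_symm] at hP hdisj ⊢
  have hTO : T ⁻¹' O = O := hO ▸ T.preimage_range_zpow_apply a
  have hTνO : T ⁻¹' (ν ⁻¹' O) = ν ⁻¹' O := by
    rw [← preimage_comp, show ν ∘ T = T ∘ ν from funext hcomm, preimage_comp, hTO]
  have hexit_disj : Disjoint (exitSet T P O) (exitSet T P (ν ⁻¹' O)) :=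
    (disjoint_iff_inter_eq_empty.mpr hdisj).mono (fun _ h => h.1) (fun _ h => h.1)
  have hswap : (exitSet T P O).ncard = (exitSet T P (ν ⁻¹' O)).ncard := by
    rw [ncard_exitSet_eq_ncard_entrySet T P (toFinite _) hTνO, ← preimage_exitSet hP hcomm,
      ← hν_inv.image_eq_preimage_symm, ncard_image_of_injective _ hν_inv.injective]
  change Even (exitSet T P (O ∪ ν ⁻¹' O)).ncard
  rw [exitSet_union, ncard_union_eq hexit_disj, hswap]
  exact Even.add_self _

/-- Let `T` be a permutation of a finite set `X`, `ν` a fixed-point-free involution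
commuting with `T`, and `P ⊆ X` with `ν '' P = Pᶜ`. If `O` is an orbit of the cyclic
group generated by `T` with `O ∩ ν '' O = ∅` (an asymmetric orbit), then the set of
`x ∈ O ∪ ν '' O` with `x ∈ P` and `T x ∉ P` has even cardinality. -/
theorem asymmetric_orbit_even_transitions {X : Type*} [Fintype X]
    (T : Equiv.Perm X) (ν : X → X)
    (hν_inv : Function.Involutive ν) (hν_fp : ∀ x, ν x ≠ x)
    (hcomm : ∀ x, ν (T x) = T (ν x))
    (P : Set X) (hP : ν '' P = Pᶜ)
    (a : X) (O : Set X) (hO : O = Set.range (fun n : ℤ => (T ^ n) a))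
    (hdisj : O ∩ (ν '' O) = ∅) :
    Even (Set.ncard {x | x ∈ O ∪ ν '' O ∧ x ∈ P ∧ T x ∉ P}) :=
  asymmetric_orbit_even_transitions_general T ν hν_inv hcomm P hP a O hO hdisj
end

section
/- Let X be a nonempty finite set, T : X → X a bijection such that the cyclic group generated by T acts transitively on X, ν : X → X a fixed-point-free involution commuting with T, and P ⊆ X a subset such that ν(P) equals the complement X \ P. Then the set {x ∈ X : x ∈ P and T(x) ∉ P} has odd cardinality. -/
/-!
Write `X` as the orbit `x_k = T^[k] x₀`, `k < n`. Since `ν` commutes with `T` and sends `x₀` to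
some `x_c`, it acts as the shift by `c`, and `ν ∘ ν = id` forces `n = 2 * c`. The exits from `P`
(`x_k ∈ P`, `x_{k+1} ∉ P`) with `k ≥ c` are the `ν`-images of the entries into `P` with `k < c`, so
the exits are as many as all changes of membership along the path `x₀, …, x_c`. That number is
odd because `x_c = ν x₀` lies on the other side of `P` from `x₀`.
-/

open Finset Function

theorem even_card_filter_range_not_iff_iff (p : ℕ → Prop) [DecidablePred p] (c : ℕ) :
    Even #{k ∈ range c | ¬(p k ↔ p (k + 1))} ↔ (p 0 ↔ p c) := by
  induction c with
  | zero => simp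
  | succ c ih =>
    rw [range_add_one, filter_insert]
    split_ifs with h
    · rw [ih]
      tauto
    · rw [card_insert_of_notMem (by simp), Nat.even_add_one, ih]
      tauto

theorem card_filter_not_iff {α : Type*} (s : Finset α) (p q : α → Prop) [DecidablePred p]
    [DecidablePred q] :
    #{a ∈ s | ¬(p a ↔ q a)} = #{a ∈ s | p a ∧ ¬q a} + #{a ∈ s | ¬p a ∧ q a} := by
  classical
  rw [← card_union_of_disjoint (disjoint_filter.2 fun _ _ h h' => h'.1 h.1), ← filter_or]
  congr 1
  ext
  simp only [mem_filter]
  tauto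

theorem card_filter_range_add (p : ℕ → Prop) [DecidablePred p] (m n : ℕ) :
    #{k ∈ range (m + n) | p k} = #{k ∈ range m | p k} + #{k ∈ range n | p (m + k)} := by
  simp only [card_filter, sum_range_add]

theorem Function.ncard_eq_card_filter_range_minimalPeriod {α : Type*} {f : α → α} {x : α}
    (hx : 0 < minimalPeriod f x) (hsurj : ∀ y, ∃ k, f^[k] x = y) (s : Set α)
    [DecidablePred (· ∈ s)] :
    s.ncard = #{k ∈ range (minimalPeriod f x) | f^[k] x ∈ s} := by
  have himage : (f^[·] x) '' ↑{k ∈ range (minimalPeriod f x) | f^[k] x ∈ s} = s := by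
    ext y
    obtain ⟨k, rfl⟩ := hsurj y
    refine ⟨?_, fun hy => ⟨k % minimalPeriod f x, ?_, iterate_mod_minimalPeriod_eq⟩⟩
    · rintro ⟨j, hj, hjk⟩
      rw [← hjk]
      exact (mem_filter.1 hj).2
    · simpa [iterate_mod_minimalPeriod_eq, Nat.mod_lt _ hx] using hy
  nth_rewrite 1 [← himage]
  rw [Set.InjOn.ncard_image, Set.ncard_coe_finset]
  exact iterate_injOn_Iio_minimalPeriod.mono fun k hk => mem_range.1 (mem_filter.1 hk).1

theorem Function.exists_minimalPeriod_eq_two_mul {α : Type*} {f ν : α → α} {x : α} {m : ℕ}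
    (hν : Involutive ν) (hcomm : Function.Commute ν f) (hνx : ν x ≠ x)
    (hx : 0 < minimalPeriod f x) (hm : ν x = f^[m] x) :
    ∃ c, minimalPeriod f x = 2 * c ∧ ν x = f^[c] x := by
  set c := m % minimalPeriod f x
  have hc : ν x = f^[c] x := hm.trans iterate_mod_minimalPeriod_eq.symm
  have hc_pos : 0 < c := Nat.pos_of_ne_zero fun h => hνx (by rw [hc, h, iterate_zero_apply])
  have hperiodic : IsPeriodicPt f (2 * c) x := by
    calc f^[2 * c] x = f^[c] (f^[c] x) := by rw [two_mul, iterate_add_apply]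
      _ = ν (ν x) := by rw [← hc, ← (hcomm.iterate_right c).eq, hc]
      _ = x := hν x
  obtain ⟨j, hj⟩ := hperiodic.minimalPeriod_dvd
  have hc_lt : c < minimalPeriod f x := Nat.mod_lt _ hx
  obtain rfl : j = 1 := by
    rcases j with _ | _ | j
    · omega
    · rfl
    · nlinarith
  exact ⟨c, by omega, hc⟩

theorem Function.Involutive.mem_iff_notMem_of_image_eq_compl {α : Type*} {ν : α → α}
    (hν : Involutive ν) {P : Set α} (hP : ν '' P = Pᶜ) (y : α) : ν y ∈ P ↔ y ∉ P := by
  rw [← Set.mem_compl_iff, ← hP, Set.image_eq_preimage_of_inverse hν.leftInverse hν.rightInverse]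
  rfl

theorem Equiv.Perm.exists_iterate_eq_of_zpow_apply_eq {X : Type*} [Finite X] (T : Equiv.Perm X)
    {x y : X} {n : ℤ} (h : (T ^ n) x = y) : ∃ k : ℕ, T^[k] x = y := by
  obtain ⟨k, hk⟩ := (mem_powers_iff_mem_zpowers (x := T)).2 ⟨n, rfl⟩
  exact ⟨k, by rw [← Equiv.Perm.coe_pow, ← h]; exact congrArg (· x) hk⟩

/-- Let `X` be a nonempty finite set, `T` a permutation of `X` whose powers act
transitively on `X`, `ν` a fixed-point-free involution commuting with `T`, and
`P ⊆ X` with `ν '' P = Pᶜ`. Then the set of `x ∈ P` with `T x ∉ P` has odd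
cardinality. -/
theorem symmetric_orbit_odd_transitions {X : Type*} [Fintype X] [Nonempty X]
    (T : Equiv.Perm X)
    (htrans : ∀ x y : X, ∃ n : ℤ, (T ^ n) x = y)
    (ν : X → X)
    (hν_inv : Function.Involutive ν) (hν_fp : ∀ x, ν x ≠ x)
    (hcomm : ∀ x, ν (T x) = T (ν x))
    (P : Set X) (hP : ν '' P = Pᶜ) :
    Odd (Set.ncard {x | x ∈ P ∧ T x ∉ P}) := by
  classical
  obtain ⟨x₀⟩ := ‹Nonempty X›
  have hsurj : ∀ y, ∃ k, T^[k] x₀ = y := fun y =>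
    (htrans x₀ y).elim fun _ hn => T.exists_iterate_eq_of_zpow_apply_eq hn
  have hpos : 0 < minimalPeriod T x₀ := Nat.pos_of_ne_zero (MulAction.minimalPeriod_pos T x₀).out
  obtain ⟨m, hm⟩ := hsurj (ν x₀)
  obtain ⟨c, hperiod, hc⟩ := exists_minimalPeriod_eq_two_mul hν_inv hcomm (hν_fp x₀) hpos hm.symm
  have hflip := hν_inv.mem_iff_notMem_of_image_eq_compl hP
  have hhalf (k : ℕ) : T^[c + k] x₀ = ν (T^[k] x₀) := by
    rw [add_comm, iterate_add_apply, ← hc, (Function.Commute.iterate_right hcomm k).eq]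
  rw [ncard_eq_card_filter_range_minimalPeriod hpos hsurj, hperiod, two_mul,
    card_filter_range_add]
  -- on the second half, `ν` turns each exit from `P` into an entry into `P`
  simp only [Set.mem_ofPred_eq, hhalf, ← hcomm, hflip, not_not, ← iterate_succ_apply' T]
  rw [← card_filter_not_iff, ← Nat.not_even_iff_odd, even_card_filter_range_not_iff_iff,
    iterate_zero_apply, ← hc, hflip]
  tauto
end

section
/- Let X be a finite set, T : X → X a bijection, ν : X → X a fixed-point-free involution commuting with T, and P ⊆ X a subset such that ν(P) equals the complement X \ P. Let N be the number of orbits O of the cyclic group generated by T that satisfy ν(O) = O. Then the cardinality of the set {x ∈ X : x ∈ P and T(x) ∉ P} is congruent to N modulo 2; in particular (−1)^{#{x ∈ X : x ∈ P, T(x) ∉ P}} = (−1)^N. -/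
open Finset

private lemma telescope2 (e : ℕ → ZMod 2) (r : ℕ) :
    ∑ n ∈ Finset.range r, (e n + e (n+1)) = e 0 + e r := by
  induction r with
  | zero => simp; generalize e 0 = x; revert x; decide
  | succ r ih =>
    rw [Finset.sum_range_succ, ih]
    generalize e 0 = x; generalize e r = y; generalize e (r+1) = z
    revert x y z; decide

private lemma key_odd (e : ℕ → ZMod 2) (r : ℕ) (he : ∀ n, e (n + r) = e n + 1) :
    ∑ n ∈ Finset.range (2*r), (e n * (1 + e (n+1))) = 1 := by
  have h2 : 2*r = r + r := by ring
  rw [h2, Finset.sum_range_add]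
  have hterm : ∀ n, e n * (1 + e (n+1)) + e (n+r) * (1 + e ((n+r)+1)) = e n + e (n+1) := by
    intro n
    have h1 : (n+r)+1 = (n+1)+r := by ring
    rw [h1, he n, he (n+1)]
    generalize e n = x; generalize e (n+1) = y
    revert x y; decide
  have : ∀ n, e (r + n) * (1 + e (r + n + 1)) = e (n + r) * (1 + e ((n+r)+1)) := by
    intro n; rw [Nat.add_comm r n]
  rw [Finset.sum_congr rfl (fun n _ => this n), ← Finset.sum_add_distrib,
    Finset.sum_congr rfl (fun n _ => hterm n), telescope2]
  have h0 := he 0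
  rw [Nat.zero_add] at h0
  rw [h0]
  generalize e 0 = x; revert x; decide

private lemma symm_fiber_odd {X : Type*} [Fintype X]
    (T : Equiv.Perm X) (ν : X → X)
    (hν_inv : Function.Involutive ν) (hν_fp : ∀ x, ν x ≠ x)
    (hcomm : ∀ x, ν (T x) = T (ν x))
    (P : Set X) (hmem : ∀ x, ν x ∈ P ↔ x ∉ P)
    (a : X) (hsc : T.SameCycle a (ν a)) :
    ∃ (e : ℕ → ZMod 2) (r : ℕ), (∀ n, e (n + r) = e n + 1) ∧
      ((Set.ncard {x | (x ∈ P ∧ T x ∉ P) ∧ T.SameCycle a x} : ZMod 2))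
        = ∑ n ∈ Finset.range (2*r), (e n * (1 + e (n+1))) := by
  classical
  have hit : ∀ (n : ℕ) (x : X), ν ((⇑T)^[n] x) = (⇑T)^[n] (ν x) := by
    intro n
    induction n with
    | zero => intro x; simp
    | succ n ih =>
      intro x
      rw [Function.iterate_succ_apply', Function.iterate_succ_apply', hcomm, ih]
  set m := Function.minimalPeriod (⇑T) a with hm
  have hTpow : ∀ n : ℕ, ((T ^ n : Equiv.Perm X) : X → X) = (⇑T)^[n] := by
    intro n; exact Equiv.Perm.coe_pow T n
  have hmpos : 0 < m := by
    refine Function.IsPeriodicPt.minimalPeriod_pos (orderOf_pos T) ?_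
    show (⇑T)^[orderOf T] a = a
    rw [← hTpow, pow_orderOf_eq_one]; rfl
  obtain ⟨k, hklt, hk⟩ := hsc.exists_pow_eq'
  have hk' : (⇑T)^[k] a = ν a := by rw [← hTpow]; exact hk
  have h2k : m ∣ 2 * k := by
    apply Function.IsPeriodicPt.minimalPeriod_dvd
    show (⇑T)^[2*k] a = a
    rw [two_mul, Function.iterate_add_apply, hk', ← hit, hk', hν_inv a]
  have hndvd : ¬ m ∣ k := by
    intro hd
    have : (⇑T)^[k] a = a := (Function.isPeriodicPt_iff_minimalPeriod_dvd).mpr hd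
    rw [hk'] at this
    exact hν_fp a this
  have hmeven : 2 ∣ m := by
    by_contra hodd
    have hcop : Nat.Coprime m 2 := by
      rcases Nat.even_or_odd m with he | ho
      · exact absurd he.two_dvd hodd
      · exact Nat.Coprime.symm (Nat.coprime_two_left.mpr ho)
    exact hndvd (hcop.dvd_of_dvd_mul_left h2k)
  obtain ⟨r, hr⟩ := hmeven
  have hνa : ν a = (⇑T)^[r] a := by
    obtain ⟨t, ht⟩ := h2k
    have hkrt : k = r * t := by
      refine Nat.eq_of_mul_eq_mul_left (show 0 < 2 by norm_num) ?_
      rw [ht, hr]; ring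
    have ht_odd : ¬ 2 ∣ t := by
      rintro ⟨s, hs⟩
      refine hndvd ⟨s, ?_⟩
      rw [hkrt, hs, hr]; ring
    obtain ⟨s, hs⟩ : ∃ s, t = 2*s + 1 := ⟨t/2, by omega⟩
    have hfix : (⇑T)^[m*s] a = a := (Function.isPeriodicPt_minimalPeriod (⇑T) a).mul_const s
    have : (⇑T)^[k] a = (⇑T)^[r] a := by
      have hk2 : k = r + m * s := by rw [hkrt, hs, hr]; ring
      rw [hk2, Function.iterate_add_apply, hfix]
    rw [← this, hk']
  set e : ℕ → ZMod 2 := fun n => if (⇑T)^[n] a ∈ P then 1 else 0 with he_def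
  have he : ∀ n, e (n + r) = e n + 1 := by
    intro n
    have h1 : (⇑T)^[n + r] a = ν ((⇑T)^[n] a) := by
      rw [Function.iterate_add_apply, ← hνa, ← hit]
    simp only [he_def, h1]
    by_cases hx : (⇑T)^[n] a ∈ P
    · rw [if_pos hx, if_neg (by rw [hmem]; exact fun h => h hx)]; decide
    · rw [if_neg hx, if_pos ((hmem _).mpr hx)]; decide
  refine ⟨e, r, he, ?_⟩
  have hset : {x | (x ∈ P ∧ T x ∉ P) ∧ T.SameCycle a x} =
      ((Finset.range m).filter
        (fun n => (⇑T)^[n] a ∈ P ∧ (⇑T)^[n+1] a ∉ P)).image (fun n => (⇑T)^[n] a) := by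
    ext x
    simp only [Set.mem_setOf_eq, Finset.coe_image, Set.mem_image, Finset.mem_coe,
      Finset.mem_filter, Finset.mem_range]
    constructor
    · rintro ⟨⟨hxP, hxT⟩, hscx⟩
      obtain ⟨i, hilt, hi⟩ := hscx.exists_pow_eq'
      rw [hTpow] at hi
      refine ⟨i % m, ⟨Nat.mod_lt _ hmpos, ?_, ?_⟩, ?_⟩
      · rw [Function.iterate_mod_minimalPeriod_eq, hi]; exact hxP
      · rw [Function.iterate_succ_apply', Function.iterate_mod_minimalPeriod_eq, hi]; exact hxT
      · rw [Function.iterate_mod_minimalPeriod_eq, hi]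
    · rintro ⟨n, ⟨hnm, hnP, hnT⟩, rfl⟩
      refine ⟨⟨hnP, ?_⟩, ⟨(n : ℤ), ?_⟩⟩
      · rw [Function.iterate_succ_apply'] at hnT; exact hnT
      · rw [zpow_natCast, hTpow]
  have hinj : Set.InjOn (fun n => (⇑T)^[n] a)
      ((Finset.range m).filter (fun n => (⇑T)^[n] a ∈ P ∧ (⇑T)^[n+1] a ∉ P) : Finset ℕ) := by
    intro i hi j hj hij
    simp only [Finset.coe_filter, Set.mem_setOf_eq, Finset.mem_range] at hi hj
    exact Function.iterate_injOn_Iio_minimalPeriod hi.1 hj.1 hij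
  rw [hset, Set.ncard_coe_finset, Finset.card_image_of_injOn hinj, Finset.card_filter,
    Nat.cast_sum, ← hr]
  refine Finset.sum_congr rfl ?_
  intro n _
  rw [Nat.cast_ite, Nat.cast_one, Nat.cast_zero]
  simp only [he_def]
  by_cases h1 : (⇑T)^[n] a ∈ P <;> by_cases h2 : (⇑T)^[n+1] a ∈ P
  · rw [if_neg (fun h => h.2 h2), if_pos h1, if_pos h2]; decide
  · rw [if_pos ⟨h1, h2⟩, if_pos h1, if_neg h2]; decide
  · rw [if_neg (fun h => h1 h.1), if_neg h1, if_pos h2]; decide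
  · rw [if_neg (fun h => h1 h.1), if_neg h1, if_neg h2]; decide

private lemma cycle_balance {X : Type*} [Fintype X] (T : Equiv.Perm X) (P C : Set X)
    (hC : ∀ x, T x ∈ C ↔ x ∈ C) :
    Set.ncard {x | (x ∈ P ∧ T x ∉ P) ∧ x ∈ C} = Set.ncard {x | (x ∉ P ∧ T x ∈ P) ∧ x ∈ C} := by
  classical
  rw [Set.ncard_eq_toFinset_card', Set.ncard_eq_toFinset_card',
    Set.toFinset_setOf, Set.toFinset_setOf]
  have hD : ((Finset.univ.filter (fun x => (x ∈ P ∧ T x ∉ P) ∧ x ∈ C)).card : ℤ)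
      = ∑ x : X, (if (x ∈ P ∧ T x ∉ P) ∧ x ∈ C then (1:ℤ) else 0) := by
    rw [Finset.card_filter]; push_cast; rfl
  have hU : ((Finset.univ.filter (fun x => (x ∉ P ∧ T x ∈ P) ∧ x ∈ C)).card : ℤ)
      = ∑ x : X, (if (x ∉ P ∧ T x ∈ P) ∧ x ∈ C then (1:ℤ) else 0) := by
    rw [Finset.card_filter]; push_cast; rfl
  have key : ∑ x : X, ((if (x ∈ P ∧ T x ∉ P) ∧ x ∈ C then (1:ℤ) else 0)
      - (if (x ∉ P ∧ T x ∈ P) ∧ x ∈ C then (1:ℤ) else 0)) = 0 := by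
    have hterm : ∀ x : X, ((if (x ∈ P ∧ T x ∉ P) ∧ x ∈ C then (1:ℤ) else 0)
        - (if (x ∉ P ∧ T x ∈ P) ∧ x ∈ C then (1:ℤ) else 0))
        = (if x ∈ C then (1:ℤ) else 0) * ((if x ∈ P then (1:ℤ) else 0) - (if T x ∈ P then 1 else 0)) := by
      intro x
      by_cases hc : x ∈ C <;> by_cases h1 : x ∈ P <;> by_cases h2 : T x ∈ P <;>
        simp [hc, h1, h2]
    rw [Finset.sum_congr rfl (fun x _ => hterm x)]
    simp only [mul_sub]
    rw [Finset.sum_sub_distrib]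
    have : ∑ x : X, (if x ∈ C then (1:ℤ) else 0) * (if T x ∈ P then 1 else 0)
        = ∑ x : X, (if x ∈ C then (1:ℤ) else 0) * (if x ∈ P then 1 else 0) := by
      refine Finset.sum_equiv T (by simp) ?_
      intro x _
      rw [hC x]
    rw [this, sub_self]
  have hZ : ((Finset.univ.filter (fun x => (x ∈ P ∧ T x ∉ P) ∧ x ∈ C)).card : ℤ)
      = ((Finset.univ.filter (fun x => (x ∉ P ∧ T x ∈ P) ∧ x ∈ C)).card : ℤ) := by
    apply sub_eq_zero.mp
    rw [hD, hU, ← Finset.sum_sub_distrib]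
    exact key
  exact_mod_cast hZ

/-- Let `T` be a permutation of a finite set `X`, `ν` a fixed-point-free involution
commuting with `T`, and `P ⊆ X` with `ν '' P = Pᶜ`. If `N` is the number of orbits
`O` of the cyclic group generated by `T` with `ν '' O = O` (the symmetric orbits),
then `#{x ∈ P : T x ∉ P} ≡ N (mod 2)`; in particular
`(-1)^{#{x ∈ P : T x ∉ P}} = (-1)^N`. -/
theorem transitions_congr_symmetric_orbits {X : Type*} [Fintype X]
    (T : Equiv.Perm X) (ν : X → X)
    (hν_inv : Function.Involutive ν) (hν_fp : ∀ x, ν x ≠ x)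
    (hcomm : ∀ x, ν (T x) = T (ν x))
    (P : Set X) (hP : ν '' P = Pᶜ)
    (N : ℕ)
    (hN : N = Set.ncard {O : Set X |
      (∃ a : X, O = Set.range (fun n : ℤ => (T ^ n) a)) ∧ ν '' O = O}) :
    Set.ncard {x | x ∈ P ∧ T x ∉ P} ≡ N [MOD 2] ∧
      (-1 : ℤ) ^ Set.ncard {x | x ∈ P ∧ T x ∉ P} = (-1 : ℤ) ^ N := by
  classical
  have hνinj : Function.Injective ν := hν_inv.injective
  have hmem : ∀ x, ν x ∈ P ↔ x ∉ P := by
    intro x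
    constructor
    · intro h hx
      have hc : ν x ∈ Pᶜ := hP ▸ ⟨x, hx, rfl⟩
      exact hc h
    · intro hx
      by_contra h
      have hc : ν x ∈ Pᶜ := h
      rw [← hP] at hc
      obtain ⟨y, hy, hyx⟩ := hc
      exact hx (hνinj hyx ▸ hy)
  -- commuting with integer powers
  have hcomm_zpow : ∀ (n : ℤ) (x : X), ν ((T ^ n) x) = (T ^ n) (ν x) := by
    have hc : Commute (hν_inv.toPerm ν) T := by
      ext y
      simp only [Equiv.Perm.mul_apply, Function.Involutive.coe_toPerm]
      exact hcomm y
    intro n x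
    have h2 := hc.zpow_right n
    calc ν ((T ^ n) x) = ((hν_inv.toPerm ν) * T ^ n) x := rfl
      _ = (T ^ n * (hν_inv.toPerm ν)) x := by rw [h2]
      _ = (T ^ n) (ν x) := rfl
  have hsc_nu : ∀ {x y : X}, T.SameCycle x y → T.SameCycle (ν x) (ν y) := by
    rintro x y ⟨n, hn⟩
    exact ⟨n, by rw [← hcomm_zpow, hn]⟩
  have hrange : ∀ a : X, Set.range (fun n : ℤ => (T ^ n) a) = {x | T.SameCycle a x} := by
    intro a; ext x
    exact ⟨fun ⟨n, hn⟩ => ⟨n, hn⟩, fun ⟨n, hn⟩ => ⟨n, hn⟩⟩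
  set s : Setoid X := Equiv.Perm.SameCycle.setoid T with hs_def
  letI : DecidableRel ((· ≈ ·) : X → X → Prop) := fun _ _ => Classical.propDecidable _
  have hequiv : ∀ {a b : X}, (a ≈ b) = T.SameCycle a b := fun {a b} => rfl
  -- the induced involution on the quotient
  set bar : Quotient s → Quotient s :=
    Quotient.lift (fun a => Quotient.mk s (ν a))
      (fun a b hab => Quotient.sound (hsc_nu hab)) with hbar_def
  have hbar_mk : ∀ a : X, bar (Quotient.mk s a) = Quotient.mk s (ν a) := fun a => rfl
  have hbar_inv : ∀ q, bar (bar q) = q := by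
    refine Quotient.ind ?_
    intro a
    rw [hbar_mk, hbar_mk, hν_inv a]
  set φ : Quotient s → Set X :=
    Quotient.lift (fun a => {x | T.SameCycle a x})
      (fun a b hab => Set.ext fun x => ⟨fun h => (Equiv.Perm.SameCycle.symm hab).trans h,
        fun h => Equiv.Perm.SameCycle.trans hab h⟩) with hφ_def
  have hφ_mk : ∀ a : X, φ (Quotient.mk s a) = {x | T.SameCycle a x} := fun a => rfl
  -- N equals the number of fixed points of bar
  have himg : {O : Set X | (∃ a : X, O = Set.range (fun n : ℤ => (T ^ n) a)) ∧ ν '' O = O}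
      = φ '' {q | bar q = q} := by
    ext O
    constructor
    · rintro ⟨⟨a, rfl⟩, hsym⟩
      rw [hrange a] at hsym ⊢
      refine ⟨Quotient.mk s a, ?_, (hφ_mk a)⟩
      show bar (Quotient.mk s a) = Quotient.mk s a
      rw [hbar_mk]
      have ha : a ∈ {x | T.SameCycle a x} := Equiv.Perm.SameCycle.refl T a
      rw [← hsym] at ha
      obtain ⟨y, hy, hya⟩ := ha
      have hνay : ν a = y := by rw [← hya, hν_inv y]
      exact Quotient.sound (show T.SameCycle (ν a) a by rw [hνay]; exact hy.symm)
    · rintro ⟨q, hq, rfl⟩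
      obtain ⟨a, rfl⟩ := q.exists_rep
      have hsca : T.SameCycle a (ν a) := by
        have hq' : bar (Quotient.mk s a) = Quotient.mk s a := hq
        rw [hbar_mk] at hq'
        exact (Quotient.exact hq').symm
      have hcl : ∀ x, T.SameCycle a x → T.SameCycle a (ν x) :=
        fun x hx => hsca.trans (hsc_nu hx)
      constructor
      · exact ⟨a, by rw [hrange a, hφ_mk]⟩
      · rw [hφ_mk]
        ext y
        constructor
        · rintro ⟨x, hx, rfl⟩
          exact hcl x hx
        · intro hy
          exact ⟨ν y, hcl y hy, hν_inv y⟩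
  have hφinj : Set.InjOn φ {q | bar q = q} := by
    intro q1 _ q2 _ h
    obtain ⟨a, rfl⟩ := q1.exists_rep
    obtain ⟨b, rfl⟩ := q2.exists_rep
    rw [hφ_mk, hφ_mk] at h
    have : T.SameCycle a b := by
      have hb : b ∈ {x | T.SameCycle b x} := Equiv.Perm.SameCycle.refl T b
      rw [← h] at hb
      exact hb
    exact Quotient.sound this
  have hNfix : N = (Finset.univ.filter (fun q : Quotient s => bar q = q)).card := by
    rw [hN, himg, Set.ncard_image_of_injOn hφinj, Set.ncard_eq_toFinset_card',
      Set.toFinset_setOf]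
  -- fiberwise count
  have hScard : Set.ncard {x | x ∈ P ∧ T x ∉ P}
      = (Finset.univ.filter (fun x => x ∈ P ∧ T x ∉ P)).card := by
    rw [Set.ncard_eq_toFinset_card', Set.toFinset_setOf]
  have hfib := Finset.card_eq_sum_card_fiberwise
    (f := fun x : X => Quotient.mk s x)
    (s := Finset.univ.filter (fun x => x ∈ P ∧ T x ∉ P))
    (t := (Finset.univ : Finset (Quotient s)))
    (fun x _ => Finset.mem_univ _)
  set Fq : Quotient s → ZMod 2 := fun q =>
    ((((Finset.univ.filter (fun x => x ∈ P ∧ T x ∉ P)).filter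
        (fun x => Quotient.mk s x = q)).card : ℕ) : ZMod 2) with hFq_def
  have hcast : ((Set.ncard {x | x ∈ P ∧ T x ∉ P} : ℕ) : ZMod 2) = ∑ q : Quotient s, Fq q := by
    rw [hScard, hfib, Nat.cast_sum]
  -- identify the fibers
  have hFq_eq : ∀ a : X, Fq (Quotient.mk s a)
      = ((Set.ncard {x | (x ∈ P ∧ T x ∉ P) ∧ T.SameCycle a x} : ℕ) : ZMod 2) := by
    intro a
    have h0 : Fq (Quotient.mk s a)
        = ((((Finset.univ.filter (fun x => x ∈ P ∧ T x ∉ P)).filter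
            (fun x => Quotient.mk s x = Quotient.mk s a)).card : ℕ) : ZMod 2) := rfl
    rw [h0]
    congr 1
    rw [Set.ncard_eq_toFinset_card', Set.toFinset_setOf, Finset.filter_filter]
    congr 1
    apply Finset.filter_congr
    intro x _
    constructor
    · rintro ⟨h1, h2⟩
      exact ⟨h1, Equiv.Perm.SameCycle.symm (Quotient.exact h2)⟩
    · rintro ⟨h1, h2⟩
      exact ⟨h1, Quotient.sound h2.symm⟩
  -- fibers of paired orbits have equal count
  have hFbar : ∀ q, Fq (bar q) = Fq q := by
    refine Quotient.ind ?_
    intro a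
    rw [hbar_mk, hFq_eq, hFq_eq]
    congr 1
    have himage : ν '' {x | (x ∈ P ∧ T x ∉ P) ∧ T.SameCycle a x}
        = {y | (y ∉ P ∧ T y ∈ P) ∧ T.SameCycle (ν a) y} := by
      ext y
      constructor
      · rintro ⟨x, ⟨⟨hxP, hxT⟩, hxs⟩, rfl⟩
        refine ⟨⟨fun h => ((hmem x).mp h) hxP, ?_⟩, hsc_nu hxs⟩
        rw [← hcomm]
        exact (hmem (T x)).mpr hxT
      · rintro ⟨⟨hyP, hyT⟩, hys⟩
        refine ⟨ν y, ⟨⟨(hmem y).mpr hyP, ?_⟩, ?_⟩, hν_inv y⟩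
        · rw [← hcomm]
          intro h
          exact ((hmem (T y)).mp h) hyT
        · have := hsc_nu hys
          rwa [hν_inv a] at this
    have h1 : Set.ncard {x | (x ∈ P ∧ T x ∉ P) ∧ T.SameCycle a x}
        = Set.ncard {y | (y ∉ P ∧ T y ∈ P) ∧ T.SameCycle (ν a) y} := by
      rw [← himage, Set.ncard_image_of_injective _ hνinj]
    have h2 : Set.ncard {y | (y ∈ P ∧ T y ∉ P) ∧ T.SameCycle (ν a) y}
        = Set.ncard {y | (y ∉ P ∧ T y ∈ P) ∧ T.SameCycle (ν a) y} := by
      have := cycle_balance T P {x | T.SameCycle (ν a) x}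
        (fun x => by
          simp only [Set.mem_setOf_eq]
          exact ⟨fun h => h.of_apply_right, fun h => h.apply_right⟩)
      simpa using this
    rw [h2, ← h1]
  -- symmetric fibers are odd
  have hFfix : ∀ q, bar q = q → Fq q = 1 := by
    refine Quotient.ind ?_
    intro a hq
    rw [hbar_mk] at hq
    have hsca : T.SameCycle a (ν a) := (Quotient.exact hq).symm
    rw [hFq_eq]
    obtain ⟨e, r, he, heq⟩ := symm_fiber_odd T ν hν_inv hν_fp hcomm P hmem a hsca
    rw [heq]
    exact key_odd e r he
  -- sum up
  have hsplit := Finset.sum_filter_add_sum_filter_not Finset.univ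
    (fun q : Quotient s => bar q = q) Fq
  have hnonfix : ∑ q ∈ Finset.univ.filter (fun q : Quotient s => ¬ bar q = q), Fq q = 0 := by
    refine Finset.sum_involution (fun q _ => bar q) ?_ ?_ ?_ ?_
    · intro q _
      rw [hFbar]
      generalize Fq q = z; revert z; decide
    · intro q hq _
      exact (Finset.mem_filter.mp hq).2
    · intro q hq
      simp only [Finset.mem_filter, Finset.mem_univ, true_and] at hq ⊢
      rw [hbar_inv]
      exact fun h => hq h.symm
    · intro q _
      exact hbar_inv q
  have hfixsum : ∑ q ∈ Finset.univ.filter (fun q : Quotient s => bar q = q), Fq q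
      = ((N : ℕ) : ZMod 2) := by
    rw [Finset.sum_congr rfl (fun q hq => hFfix q (Finset.mem_filter.mp hq).2),
      Finset.sum_const, nsmul_eq_mul, mul_one, hNfix]
  have hfinal : ((Set.ncard {x | x ∈ P ∧ T x ∉ P} : ℕ) : ZMod 2) = ((N : ℕ) : ZMod 2) := by
    rw [hcast, ← hsplit, hnonfix, add_zero, hfixsum]
  have hmod : Set.ncard {x | x ∈ P ∧ T x ∉ P} ≡ N [MOD 2] :=
    (ZMod.natCast_eq_natCast_iff _ _ _).mp hfinal
  refine ⟨hmod, ?_⟩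
  have hpar : Set.ncard {x | x ∈ P ∧ T x ∉ P} % 2 = N % 2 := hmod
  rcases Nat.even_or_odd (Set.ncard {x | x ∈ P ∧ T x ∉ P}) with he | ho
  · have hNe : Even N := by rw [Nat.even_iff] at he ⊢; omega
    rw [Even.neg_one_pow he, Even.neg_one_pow hNe]
  · have hNo : Odd N := by rw [Nat.odd_iff] at ho ⊢; omega
    rw [Odd.neg_one_pow ho, Odd.neg_one_pow hNo]
end
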